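/- arXiv:1711.02491 — 2 statements merged into one kernel-verified Lean document; each statement's English description precedes it below -/
import Mathlib

section
/- Let r and h be positive integers with r < φ^h, and let s, t be integers with 0 ≤ s ≤ r−1 and 0 ≤ t ≤ r−1. Then there exist nonnegative integers u and v such that u = G(v), u ≡ s (mod r), v ≡ t (mod r), and if v > 0 then v has a Zeckendorf representation of length at most 2h; that is, there is a bit string β = β_1…β_L with L ≤ 2h, each β_i ∈ {0,1}, β_L = 1, no two consecutive bits both 1, and v = Σ_{i=1}^L β_i F_{i+1}. -/
/-!
Take `v = t + k r`. Since `φ⁻¹ = φ - 1`, `(v + 1)/φ = (t + 1)/φ + r (kφ - n) + r (n - k)` for every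
integer `n`, so `G(v) ≡ s (mod r)` as soon as `kφ - n` lies in a suitable window of length `1/r`.
The points `kφ - n` with `k < F_{h+2}` meet every window of length `φ⁻ʰ < 1/r`: passing from `h`
to `h + 1` adds the translates by `F_{h+1}φ - F_{h+2} = -ψ^{h+1}`, of size `φ^{-(h+1)}`, which
fill the gaps. Finally `v < r F_{h+2} ≤ F_{2h+2}` because `r < φʰ`, so the Zeckendorf
representation of `v` has length at most `2h`.
-/

noncomputable def goldenphi : ℝ := (1 + Real.sqrt 5) / 2

noncomputable def hofG (x : ℕ) : ℕ := (⌊((x : ℝ) + 1) / goldenphi⌋).toNat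

open Real goldenRatio

lemma goldenphi_eq_goldenRatio : goldenphi = φ := rfl

section Windows

variable {α : Type*} [AddCommGroup α] [LinearOrder α] [IsOrderedAddMonoid α]

lemma exists_mem_Ico_or_add_mem_Ico {S : Set α} {a c δ : α} (hca : c ≤ a) (hδ : |δ| = a)
    (hS : ∀ y, ∃ p ∈ S, p ∈ Set.Ico y (y + (a + c))) (x : α) :
    ∃ p ∈ S, p ∈ Set.Ico x (x + a) ∨ p + δ ∈ Set.Ico x (x + a) := by
  rcases (abs_eq (hδ ▸ abs_nonneg δ)).1 hδ with hδa | hδa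
  · obtain ⟨p, hpS, hp⟩ := hS (x - a)
    refine ⟨p, hpS, ?_⟩
    by_cases hpx : x ≤ p
    · exact .inl ⟨hpx, by grind⟩
    · exact .inr ⟨by grind, by grind⟩
  · obtain ⟨p, hpS, hp⟩ := hS x
    refine ⟨p, hpS, ?_⟩
    by_cases hpx : p < x + a
    · exact .inl ⟨hp.1, hpx⟩
    · exact .inr ⟨by grind, by grind⟩

end Windows

lemma abs_goldenConj : |ψ| = φ⁻¹ := by
  rw [abs_of_neg goldenConj_neg, inv_goldenRatio]

lemma inv_goldenRatio_add_sq : φ⁻¹ + φ⁻¹ ^ 2 = 1 := by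
  rw [inv_goldenRatio, neg_sq, goldenConj_sq]
  ring

lemma inv_goldenRatio_lt_one : φ⁻¹ < 1 :=
  inv_lt_one_of_one_lt₀ one_lt_goldenRatio

theorem exists_fib_mul_goldenRatio_sub_mem_Ico (l : ℕ) (x : ℝ) :
    ∃ k < Nat.fib (l + 2), ∃ n : ℤ, (k : ℝ) * φ - n ∈ Set.Ico x (x + φ⁻¹ ^ l) := by
  induction l generalizing x with
  | zero =>
    refine ⟨0, by simp, -⌈x⌉, ?_⟩
    simpa using ⟨Int.le_ceil x, Int.ceil_lt_add_one x⟩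
  | succ l ih =>
    have hδ : |(Nat.fib (l + 1) : ℝ) * φ - Nat.fib (l + 2)| = φ⁻¹ ^ (l + 1) := by
      rw [← abs_neg, neg_sub, mul_comm, fib_succ_sub_goldenRatio_mul_fib, abs_pow,
        abs_goldenConj]
    have hca : φ⁻¹ ^ (l + 2) ≤ φ⁻¹ ^ (l + 1) :=
      pow_le_pow_of_le_one (by positivity) inv_goldenRatio_lt_one.le (by omega)
    have hwidth : φ⁻¹ ^ (l + 1) + φ⁻¹ ^ (l + 2) = φ⁻¹ ^ l := by
      rw [← mul_one (φ⁻¹ ^ l), ← inv_goldenRatio_add_sq]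
      ring
    have hS : ∀ y : ℝ, ∃ p ∈ {p : ℝ | ∃ k < Nat.fib (l + 2), ∃ n : ℤ, p = k * φ - n},
        p ∈ Set.Ico y (y + (φ⁻¹ ^ (l + 1) + φ⁻¹ ^ (l + 2))) := by
      intro y
      obtain ⟨k, hk, n, hkn⟩ := ih y
      exact ⟨_, ⟨k, hk, n, rfl⟩, hwidth ▸ hkn⟩
    obtain ⟨_, ⟨k, hk, n, rfl⟩, hp | hp⟩ := exists_mem_Ico_or_add_mem_Ico hca hδ hS x
    · exact ⟨k, hk.trans_le (Nat.fib_mono (by omega)), n, hp⟩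
    · refine ⟨k + Nat.fib (l + 1), by
        rw [Nat.fib_add_two, add_comm (Nat.fib (l + 1))]; exact Nat.add_lt_add_right hk _,
        n + Nat.fib (l + 2), ?_⟩
      convert hp using 1
      push_cast
      ring

lemma goldenRatio_pow_mul_fib_add_two (h : ℕ) :
    φ ^ h * Nat.fib (h + 2) = Nat.fib (2 * h + 2) - ψ ^ (h + 2) * Nat.fib h := by
  simp only [coe_fib_eq]
  ring

lemma fib_le_goldenRatio_pow (n : ℕ) : (Nat.fib n : ℝ) ≤ φ ^ n := by
  rw [← fib_succ_sub_goldenConj_mul_fib]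
  have : (Nat.fib n : ℝ) ≤ Nat.fib (n + 1) := by exact_mod_cast Nat.fib_le_fib_succ
  nlinarith [goldenConj_neg, Nat.cast_nonneg (α := ℝ) (Nat.fib n)]

lemma mul_fib_add_two_le_fib_of_lt_goldenRatio_pow {r h : ℕ} (hr : (r : ℝ) < φ ^ h) :
    r * Nat.fib (h + 2) ≤ Nat.fib (2 * h + 2) := by
  have herr : -(ψ ^ (h + 2) * Nat.fib h) < 1 :=
    calc -(ψ ^ (h + 2) * Nat.fib h) ≤ φ⁻¹ ^ (h + 2) * φ ^ h := by
          rw [← abs_goldenConj, ← abs_pow]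
          exact neg_le_abs _ |>.trans_eq (abs_mul _ _) |>.trans
            (by gcongr; simpa using fib_le_goldenRatio_pow h)
      _ = φ⁻¹ ^ 2 := by
          rw [pow_add, mul_right_comm, ← mul_pow, inv_mul_cancel₀ goldenRatio_ne_zero, one_pow,
            one_mul]
      _ < 1 := pow_lt_one₀ (by positivity) inv_goldenRatio_lt_one two_ne_zero
  have hfib : (0 : ℝ) < Nat.fib (h + 2) := by exact_mod_cast Nat.fib_pos.2 (by omega)
  have : (r * Nat.fib (h + 2) : ℝ) < Nat.fib (2 * h + 2) + 1 := by
    nlinarith [goldenRatio_pow_mul_fib_add_two h]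
  exact_mod_cast Nat.lt_add_one_iff.1 (by exact_mod_cast this)

lemma natCast_hofG (v : ℕ) : (hofG v : ℤ) = ⌊((v : ℝ) + 1) / φ⌋ := by
  rw [hofG, goldenphi_eq_goldenRatio]
  exact Int.toNat_of_nonneg (Int.floor_nonneg.2 (div_nonneg (by positivity) goldenRatio_pos.le))

lemma hofG_add_mul_modEq {r s t k : ℕ} {n : ℤ}
    (h : (t + 1) / φ + r * (k * φ - n) ∈ Set.Ico (s : ℝ) (s + 1)) :
    hofG (t + k * r) ≡ s [MOD r] := by
  have hsplit : (((t + k * r : ℕ) : ℝ) + 1) / φ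
      = (t + 1) / φ + r * (k * φ - n) + ((r * (n - k) : ℤ) : ℝ) := by
    rw [div_eq_mul_inv, div_eq_mul_inv, inv_goldenRatio, ← one_sub_goldenConj]
    push_cast
    ring
  have hfloor : (hofG (t + k * r) : ℤ) = s + r * (n - k) := by
    rw [natCast_hofG, hsplit, Int.floor_add_intCast, Int.floor_eq_iff.2 (by exact_mod_cast h)]
  refine Int.natCast_modEq_iff.1 ?_
  rw [hfloor]
  exact Int.add_mul_emod_self_left _ _ _

namespace List

lemma IsZeckendorfRep.pairwise {l : List ℕ} (hl : l.IsZeckendorfRep) :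
    (l ++ [0]).Pairwise (fun a b => b + 2 ≤ a) :=
  @IsChain.pairwise ℕ (fun a b => b + 2 ≤ a) _ ⟨fun hab hbc => by omega⟩ hl

lemma IsZeckendorfRep.two_le {l : List ℕ} (hl : l.IsZeckendorfRep) {a : ℕ} (ha : a ∈ l) :
    2 ≤ a :=
  (pairwise_append.1 hl.pairwise).2.2 a ha 0 (by simp)

lemma IsZeckendorfRep.add_two_le_or_add_two_le {l : List ℕ} (hl : l.IsZeckendorfRep) {a b : ℕ}
    (ha : a ∈ l) (hb : b ∈ l) (hab : a ≠ b) : a + 2 ≤ b ∨ b + 2 ≤ a :=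
  @List.Pairwise.forall ℕ (fun a b => a + 2 ≤ b ∨ b + 2 ≤ a) _ ⟨fun _ _ h => h.symm⟩
    ((pairwise_append.1 hl.pairwise).1.imp Or.inr) a ha b hb hab

end List

namespace Nat

lemma le_greatestFib_of_mem_zeckendorf {v a : ℕ} (ha : a ∈ zeckendorf v) : a ≤ greatestFib v := by
  rcases v.eq_zero_or_pos with rfl | hv
  · simp at ha
  have hl := (isZeckendorfRep_zeckendorf v).pairwise
  rw [zeckendorf_of_pos hv, List.cons_append, List.pairwise_cons] at hl
  rw [zeckendorf_of_pos hv, List.mem_cons] at ha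
  rcases ha with rfl | ha
  · exact le_rfl
  · have := hl.1 a (List.mem_append_left _ ha)
    omega

theorem exists_zeckendorf_bits {v m : ℕ} (hv : 0 < v) (hvm : v < fib (m + 2)) :
    ∃ (L : ℕ) (β : ℕ → ℕ), L ≤ m ∧ (∀ i, β i = 0 ∨ β i = 1) ∧ β L = 1 ∧
      (∀ i, 1 ≤ i → i < L → ¬(β i = 1 ∧ β (i + 1) = 1)) ∧
      v = ∑ i ∈ Finset.Icc 1 L, β i * fib (i + 1) := by
  set l := zeckendorf v with hl_def
  have hl := isZeckendorfRep_zeckendorf v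
  have hg : greatestFib v ∈ l := by simp [hl_def, zeckendorf_of_pos hv]
  have hg2 := hl.two_le hg
  -- Mathlib lists Fibonacci indices, so bit `i` records whether `i + 1` occurs in `l`.
  refine ⟨greatestFib v - 1, fun i => if i + 1 ∈ l then 1 else 0, ?_, fun i => by grind, ?_,
    ?_, ?_⟩
  · have := greatestFib_lt.2 hvm
    omega
  · simp [Nat.sub_add_cancel (by omega : 1 ≤ greatestFib v), hg]
  · rintro i - - ⟨hi, hi'⟩
    simp only [ite_eq_left_iff, zero_ne_one, imp_false, not_not] at hi hi'
    have := hl.add_two_le_or_add_two_le hi hi' (by omega)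
    omega
  · have hsupp : l.toFinset ⊆ Finset.Icc 2 (greatestFib v) := fun a ha => by
      rw [List.mem_toFinset] at ha
      exact Finset.mem_Icc.2 ⟨hl.two_le ha, le_greatestFib_of_mem_zeckendorf ha⟩
    have hnodup : l.Nodup := (List.pairwise_append.1 hl.pairwise).1.imp (by omega)
    calc v = (l.map fib).sum := (sum_zeckendorf_fib v).symm
      _ = ∑ a ∈ l.toFinset, fib a := (List.sum_toFinset _ hnodup).symm
      _ = ∑ a ∈ Finset.Icc 2 (greatestFib v), if a ∈ l.toFinset then fib a else 0 := by
        rw [Finset.sum_ite_mem, Finset.inter_eq_right.2 hsupp]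
      _ = _ := by
        have hshift : Finset.Icc 2 (greatestFib v)
            = (Finset.Icc 1 (greatestFib v - 1)).map (addRightEmbedding 1) := by
          rw [Finset.map_add_right_Icc, Nat.sub_add_cancel (by omega)]
        rw [hshift, Finset.sum_map]
        simp [ite_mul]

end Nat

theorem stmt_9_general (r h s t : ℕ) (hr : 0 < r)
    (hrh : (r : ℝ) < goldenphi ^ h) (ht : t ≤ r - 1) :
    ∃ u v : ℕ, u = hofG v ∧ u ≡ s [MOD r] ∧ v ≡ t [MOD r] ∧
      (0 < v → ∃ (L : ℕ) (β : ℕ → ℕ), L ≤ 2 * h ∧ (∀ i, β i = 0 ∨ β i = 1) ∧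
        β L = 1 ∧ (∀ i, 1 ≤ i → i < L → ¬(β i = 1 ∧ β (i + 1) = 1)) ∧
        v = ∑ i ∈ Finset.Icc 1 L, β i * Nat.fib (i + 1)) := by
  rw [goldenphi_eq_goldenRatio] at hrh
  have hr' : (0 : ℝ) < r := by exact_mod_cast hr
  set x : ℝ := (s - (t + 1) / φ) / r
  obtain ⟨k, hk, n, hkn⟩ := exists_fib_mul_goldenRatio_sub_mem_Ico h x
  have hwidth : r * φ⁻¹ ^ h < 1 := by
    rw [inv_pow, ← div_eq_mul_inv, div_lt_one (by positivity)]
    exact hrh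
  have hG : (t + 1) / φ + r * (k * φ - n) ∈ Set.Ico (s : ℝ) (s + 1) := by
    have hx : r * x = s - (t + 1) / φ := mul_div_cancel₀ _ hr'.ne'
    constructor <;> nlinarith [hkn.1, hkn.2]
  refine ⟨_, t + k * r, rfl, hofG_add_mul_modEq hG, Nat.add_mul_mod_self_right t k r,
    fun hv => Nat.exists_zeckendorf_bits hv ?_⟩
  calc t + k * r < (k + 1) * r := by rw [add_mul, one_mul, add_comm]; omega
    _ ≤ r * Nat.fib (h + 2) := by rw [mul_comm]; exact Nat.mul_le_mul_left r hk
    _ ≤ Nat.fib (2 * h + 2) := mul_fib_add_two_le_fib_of_lt_goldenRatio_pow hrh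

theorem stmt_9 (r h s t : ℕ) (hr : 0 < r) (hh : 0 < h)
    (hrh : (r : ℝ) < goldenphi ^ h) (hs : s ≤ r - 1) (ht : t ≤ r - 1) :
    ∃ u v : ℕ, u = hofG v ∧ u ≡ s [MOD r] ∧ v ≡ t [MOD r] ∧
      (0 < v → ∃ (L : ℕ) (β : ℕ → ℕ), L ≤ 2 * h ∧ (∀ i, β i = 0 ∨ β i = 1) ∧
        β L = 1 ∧ (∀ i, 1 ≤ i → i < L → ¬(β i = 1 ∧ β (i + 1) = 1)) ∧
        v = ∑ i ∈ Finset.Icc 1 L, β i * Nat.fib (i + 1)) :=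
  stmt_9_general r h s t hr hrh ht
end

section
/- Define δ(u, v) = −u + v/φ. Let (u, v) be a Hofstadter G pair and let j ≥ 1 be such that the Zeckendorf representation β = β_1…β_L of v satisfies β_1 = ⋯ = β_{j−1} = 0 and β_j = 1 (i.e., v is in column j of the Fibonacci Zeckendorf array). Then −φ^{−j} < δ(u, v) < −φ^{−(j+2)} if j is odd, and φ^{−(j+2)} < δ(u, v) < φ^{−j} if j is even. -/
noncomputable def hofDelta (u v : ℕ) : ℝ := -(u : ℝ) + (v : ℝ) / goldenphi


lemma sqrt5_gt : (2:ℝ) < Real.sqrt 5 := by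
  have : (2:ℝ) = Real.sqrt 4 := by
    rw [show (4:ℝ) = 2^2 by norm_num, Real.sqrt_sq (by norm_num : (0:ℝ) ≤ 2)]
  rw [this]; exact Real.sqrt_lt_sqrt (by norm_num) (by norm_num)

lemma one_lt_gp : 1 < goldenphi := by unfold goldenphi; nlinarith [sqrt5_gt]

lemma gp_pos : 0 < goldenphi := lt_trans one_pos one_lt_gp

lemma gp_sq : goldenphi ^ 2 = goldenphi + 1 := by
  have h : Real.sqrt 5 ^ 2 = 5 := Real.sq_sqrt (by norm_num)
  unfold goldenphi; nlinarith [h]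

noncomputable def xphi : ℝ := goldenphi⁻¹

lemma x_pos : 0 < xphi := inv_pos.mpr gp_pos
lemma x_lt_one : xphi < 1 := inv_lt_one_of_one_lt₀ one_lt_gp
lemma x_id : xphi ^ 2 + xphi = 1 := by
  have h := gp_sq
  have hp := gp_pos
  unfold xphi
  field_simp
  nlinarith

lemma one_sub_gp : 1 - goldenphi = -xphi := by
  have h := gp_sq
  have hp := gp_pos.ne'
  unfold xphi
  field_simp
  nlinarith [gp_sq]


lemma fib_gp (n : ℕ) : (Nat.fib (n+1) : ℝ) = goldenphi * Nat.fib n + (1 - goldenphi)^n := by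
  induction n using Nat.twoStepInduction with
  | zero => simp
  | one => simp [Nat.fib]
  | more n ih1 ih2 =>
    have hfib : (Nat.fib (n+3) : ℝ) = Nat.fib (n+2) + Nat.fib (n+1) := by
      rw [show n+3 = (n+1)+2 by ring, Nat.fib_add_two]; push_cast; ring
    have h2 : (1 - goldenphi)^2 = 2 - goldenphi := by nlinarith [gp_sq]
    have hfib2 : (Nat.fib (n+2) : ℝ) = Nat.fib (n+1) + Nat.fib n := by
      rw [Nat.fib_add_two]; push_cast; ring
    calc (Nat.fib (n+3) : ℝ) = Nat.fib (n+2) + Nat.fib (n+1) := hfib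
      _ = (goldenphi * Nat.fib (n+1) + (1-goldenphi)^(n+1)) + (goldenphi * Nat.fib n + (1-goldenphi)^n) := by rw [ih2, ih1]
      _ = goldenphi * Nat.fib (n+2) + (1-goldenphi)^n * ((1-goldenphi) + 1) := by rw [hfib2]; ring
      _ = goldenphi * Nat.fib (n+2) + (1-goldenphi)^(n+2) := by
          rw [show (1-goldenphi)^(n+2) = (1-goldenphi)^n * (1-goldenphi)^2 by ring, h2]; ring_nf

noncomputable def wgt (i : ℕ) : ℝ := (-1:ℝ)^i * xphi^(i+1)

noncomputable def Ssum (L : ℕ) (β : ℕ → ℕ) : ℝ := ∑ i ∈ Finset.Icc 1 L, (β i : ℝ) * wgt i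

lemma fib_div_gp (i : ℕ) : (Nat.fib (i+1) : ℝ) / goldenphi = (Nat.fib i : ℝ) + wgt i := by
  have h := fib_gp i
  have hx : (1 - goldenphi)^i = (-1:ℝ)^i * xphi^i := by
    rw [one_sub_gp, neg_pow]
  have hgx : goldenphi * xphi = 1 := mul_inv_cancel₀ gp_pos.ne'
  rw [h, hx]
  unfold wgt
  rw [div_eq_mul_inv, show goldenphi⁻¹ = xphi from rfl]
  linear_combination (Nat.fib i : ℝ) * hgx


lemma keyA : ∀ n j (β : ℕ → ℕ) (L : ℕ), 1 ≤ j → L + 1 ≤ j + n →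
    (∀ i, β i = 0 ∨ β i = 1) →
    (∀ i, 1 ≤ i → i < L → ¬(β i = 1 ∧ β (i + 1) = 1)) →
    (∀ i, 1 ≤ i → i < j → β i = 0) →
    (-(xphi^(j+1)) < (-1:ℝ)^j * Ssum L β ∧ (-1:ℝ)^j * Ssum L β < xphi^j) ∧
    (β j = 1 → j ≤ L → xphi^(j+2) < (-1:ℝ)^j * Ssum L β) := by
  intro n
  induction n with
  | zero =>
    intro j β L hj hLn hbit hnc hz
    have hS : Ssum L β = 0 := by
      apply Finset.sum_eq_zero
      intro i hi
      simp only [Finset.mem_Icc] at hi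
      rw [hz i hi.1 (by omega)]; simp
    rw [hS, mul_zero]
    refine ⟨⟨neg_lt_zero.mpr (pow_pos x_pos _), pow_pos x_pos _⟩, fun _ hjL => by omega⟩
  | succ n ih =>
    intro j β L hj hLn hbit hnc hz
    by_cases hjL : j ≤ L
    case neg =>
      have hS : Ssum L β = 0 := by
        apply Finset.sum_eq_zero
        intro i hi
        simp only [Finset.mem_Icc] at hi
        rw [hz i hi.1 (by omega)]; simp
      rw [hS, mul_zero]
      refine ⟨⟨neg_lt_zero.mpr (pow_pos x_pos _), pow_pos x_pos _⟩, fun _ h => by omega⟩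
    case pos =>
      rcases hbit j with hb0 | hb1
      · -- β j = 0 : apply IH at j+1
        have H := ih (j+1) β L (by omega) (by omega) hbit hnc
          (fun i h1 h2 => by rcases Nat.lt_or_ge i j with h | h
                             · exact hz i h1 h
                             · have : i = j := by omega
                               rw [this]; exact hb0)
        obtain ⟨⟨hl, hr⟩, _⟩ := H
        have hpow : (-1:ℝ)^(j+1) = -(-1:ℝ)^j := by ring
        rw [hpow, neg_mul] at hl hr
        have hmono : xphi^(j+2) ≤ xphi^j :=
          pow_le_pow_of_le_one x_pos.le x_lt_one.le (by omega)
        constructor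
        · constructor
          · linarith
          · linarith
        · intro h; rw [h] at hb0; omega
      · -- β j = 1 : split off term, apply IH at j+2 with modified β
        set β' : ℕ → ℕ := fun i => if i ≤ j+1 then 0 else β i with hβ'
        have hsplit : Ssum L β = wgt j + Ssum L β' := by
          have : Ssum L β - Ssum L β' = wgt j := by
            unfold Ssum
            rw [← Finset.sum_sub_distrib]
            rw [Finset.sum_eq_single_of_mem j (Finset.mem_Icc.mpr ⟨hj, hjL⟩)]
            · rw [hb1, hβ']; simp
            · intro b hb hbj
              simp only [Finset.mem_Icc] at hb
              rcases Nat.lt_or_ge b j with h | h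
              · rw [hz b hb.1 h, hβ']; simp; intro hc; omega
              · rcases Nat.eq_or_lt_of_le h with h' | h'
                · omega
                · rcases Nat.eq_or_lt_of_le h' with h'' | h''
                  · -- b = j+1
                    have hb1' : β b = 0 := by
                      rcases hbit b with h0 | h1
                      · exact h0
                      · exact absurd ⟨hb1, by rw [show j+1 = b by omega]; exact h1⟩ (hnc j hj (by omega))
                    have hb2' : β' b = 0 := by rw [hβ']; simp [show b ≤ j+1 by omega]
                    rw [hb1', hb2']; simp
                  · rw [hβ']; simp [show ¬ (b ≤ j+1) by omega]
          linarith
        have H := ih (j+2) β' L (by omega) (by omega)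
          (fun i => by rw [hβ']; by_cases h : i ≤ j+1 <;> simp [h]; exact hbit i)
          (fun i h1 h2 hc => by
            have hi1 : β i = 1 := by
              have := hc.1; rw [hβ'] at this; by_cases h : i ≤ j+1 <;> simp [h] at this; exact this
            have hi2 : β (i+1) = 1 := by
              have := hc.2; rw [hβ'] at this; by_cases h : i+1 ≤ j+1 <;> simp [h] at this; exact this
            exact hnc i h1 h2 ⟨hi1, hi2⟩)
          (fun i h1 h2 => by rw [hβ']; simp [show i ≤ j+1 by omega])
        obtain ⟨⟨hl, hr⟩, _⟩ := H
        have hpow : (-1:ℝ)^(j+2) = (-1:ℝ)^j := by ring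
        rw [hpow] at hl hr
        have e1 : xphi^(j+1) + xphi^(j+2) = xphi^j := by
          linear_combination xphi^j * x_id
        have e2 : xphi^(j+1) - xphi^(j+3) = xphi^(j+2) := by
          linear_combination (-(xphi^(j+1))) * x_id
        have hT : (-1:ℝ)^j * Ssum L β = xphi^(j+1) + (-1:ℝ)^j * Ssum L β' := by
          rw [hsplit]; unfold wgt
          rw [show (-1:ℝ)^j * ((-1:ℝ)^j * xphi^(j+1) + Ssum L β')
              = ((-1:ℝ)^j)^2 * xphi^(j+1) + (-1:ℝ)^j * Ssum L β' by ring]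
          rw [show ((-1:ℝ)^j)^2 = 1 by rw [← pow_mul, mul_comm, pow_mul]; simp]
          ring
        rw [hT]
        have hp1 : (0:ℝ) < xphi^(j+1) := pow_pos x_pos _
        have hp2 : (0:ℝ) < xphi^(j+2) := pow_pos x_pos _
        refine ⟨⟨by linarith, by linarith⟩, fun _ _ => by linarith⟩


theorem stmt_14 (u v L j : ℕ) (β : ℕ → ℕ) (hL : 0 < L) (hj : 1 ≤ j) (hjL : j ≤ L)
    (hbit : ∀ i, β i = 0 ∨ β i = 1) (hlast : β L = 1)
    (hnoconsec : ∀ i, 1 ≤ i → i < L → ¬(β i = 1 ∧ β (i + 1) = 1))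
    (hv : v = ∑ i ∈ Finset.Icc 1 L, β i * Nat.fib (i + 1))
    (hu : u = hofG v)
    (hzero : ∀ i, 1 ≤ i → i < j → β i = 0) (hβj : β j = 1) :
    (Odd j → -(goldenphi ^ j)⁻¹ < hofDelta u v ∧
      hofDelta u v < -(goldenphi ^ (j + 2))⁻¹) ∧
    (Even j → (goldenphi ^ (j + 2))⁻¹ < hofDelta u v ∧
      hofDelta u v < (goldenphi ^ j)⁻¹) := by
  set N : ℕ := ∑ i ∈ Finset.Icc 1 L, β i * Nat.fib i with hN
  set S : ℝ := Ssum L β with hS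
  -- v/φ = N + S
  have hvphi : (v : ℝ) / goldenphi = (N : ℝ) + S := by
    have h1 : (v : ℝ) = ∑ i ∈ Finset.Icc 1 L, (β i : ℝ) * (Nat.fib (i+1) : ℝ) := by
      rw [hv]; push_cast; rfl
    rw [h1, Finset.sum_div]
    have h2 : ∀ i ∈ Finset.Icc 1 L, (β i : ℝ) * (Nat.fib (i+1) : ℝ) / goldenphi
        = (β i : ℝ) * (Nat.fib i : ℝ) + (β i : ℝ) * wgt i := by
      intro i _
      rw [mul_div_assoc, fib_div_gp]; ring
    rw [Finset.sum_congr rfl h2, Finset.sum_add_distrib]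
    congr 1
    rw [hN]; push_cast; rfl
  -- bounds on S
  obtain ⟨⟨_, hT2⟩, hfine⟩ := keyA (L+1) j β L hj (by omega) hbit hnoconsec hzero
  have hT1 := hfine hβj hjL
  rw [← hS] at hT1 hT2
  have hxj_le : xphi ^ j ≤ xphi := by
    calc xphi ^ j ≤ xphi ^ 1 := pow_le_pow_of_le_one x_pos.le x_lt_one.le hj
      _ = xphi := pow_one _
  have hpj2 : (0:ℝ) < xphi ^ (j+2) := pow_pos x_pos _
  have hSrange : -xphi < S ∧ S + xphi < 1 := by
    rcases Nat.even_or_odd j with he | ho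
    · have hp : ((-1:ℝ))^j = 1 := he.neg_one_pow
      rw [hp, one_mul] at hT1 hT2
      have hj2 : 2 ≤ j := by rcases he with ⟨k, hk⟩; omega
      have : xphi ^ j ≤ xphi ^ 2 := pow_le_pow_of_le_one x_pos.le x_lt_one.le hj2
      constructor
      · nlinarith [x_pos]
      · nlinarith [x_id]
    · have hp : ((-1:ℝ))^j = -1 := ho.neg_one_pow
      rw [hp, neg_one_mul] at hT1 hT2
      constructor
      · nlinarith
      · nlinarith [x_pos, x_lt_one, x_id]
  -- floor
  have hfloor : ⌊((v:ℝ) + 1) / goldenphi⌋ = (N : ℤ) := by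
    have hx : (1:ℝ) / goldenphi = xphi := by rw [one_div]; rfl
    have : ((v:ℝ) + 1) / goldenphi = (N : ℝ) + (S + xphi) := by
      rw [add_div, hvphi, hx]; ring
    rw [this]
    rw [Int.floor_eq_iff]
    constructor
    · push_cast; nlinarith [hSrange.1, x_pos]
    · push_cast; nlinarith [hSrange.2]
  have huN : u = N := by rw [hu]; unfold hofG; rw [hfloor]; simp
  have hdelta : hofDelta u v = S := by
    unfold hofDelta; rw [huN, hvphi]; ring
  have hxpow : ∀ m : ℕ, xphi ^ m = (goldenphi ^ m)⁻¹ := by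
    intro m; rw [show xphi = goldenphi⁻¹ from rfl, inv_pow]
  rw [hdelta]
  constructor
  · intro ho
    have hp : ((-1:ℝ))^j = -1 := ho.neg_one_pow
    rw [hp, neg_one_mul] at hT1 hT2
    rw [← hxpow j, ← hxpow (j+2)]
    constructor <;> linarith
  · intro he
    have hp : ((-1:ℝ))^j = 1 := he.neg_one_pow
    rw [hp, one_mul] at hT1 hT2
    rw [← hxpow j, ← hxpow (j+2)]
    exact ⟨hT1, hT2⟩
end
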